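/- arXiv:1207.5033 — 6 statements merged into one kernel-verified Lean document; each statement's English description precedes it below -/
import Mathlib

section
/- Let ω : ℝ → ℝ be a weight on the additive group ℝ (i.e., ω is continuous, positive, and ω(s+t) ≤ ω(s)ω(t) for all s,t). If liminf_{t→∞} ω(t)ω(−t)/t = 0, then for every t₀ > 0 one has liminf_{n→∞} ω(n t₀)ω(−n t₀)/n = 0. -/
/-!
Write `Ω = symmProd ω`, so `Ω t = ω t * ω (-t)`. Then `Ω` is again a weight, and it is even,
so every point `n t₀` within `t₀` below `t` has `Ω (n t₀) ≤ Ω t · sup_{[0, t₀]} Ω`. Taking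
`n = ⌊t / t₀⌋₊` for the points `t` along which `Ω t / t` is small gives `n ≥ t / (2 t₀)` once
`t ≥ 2 t₀`, so `Ω (n t₀) / n ≤ 2 t₀ · sup_{[0, t₀]} Ω · Ω t / t` is small as well.
-/

open Set

section SymmProd

variable {G : Type*} [AddCommGroup G] (ω : G → ℝ)

def symmProd (t : G) : ℝ := ω t * ω (-t)

variable {ω}

lemma symmProd_neg (t : G) : symmProd ω (-t) = symmProd ω t := by
  simp only [symmProd, neg_neg, mul_comm]

lemma symmProd_add_le (hnonneg : ∀ t, 0 ≤ ω t) (hsub : ∀ s t, ω (s + t) ≤ ω s * ω t)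
    (s t : G) : symmProd ω (s + t) ≤ symmProd ω s * symmProd ω t :=
  calc ω (s + t) * ω (-(s + t)) = ω (s + t) * ω (-s + -t) := by rw [neg_add]
    _ ≤ (ω s * ω t) * (ω (-s) * ω (-t)) :=
      mul_le_mul (hsub s t) (hsub _ _) (hnonneg _) (mul_nonneg (hnonneg _) (hnonneg _))
    _ = symmProd ω s * symmProd ω t := by simp only [symmProd]; ring

lemma symmProd_le_mul_of_sub_mem {K : Set G} {C : ℝ} (hnonneg : ∀ t, 0 ≤ ω t)
    (hsub : ∀ s t, ω (s + t) ≤ ω s * ω t) (hC : ∀ r ∈ K, symmProd ω r ≤ C)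
    {s t : G} (hts : t - s ∈ K) : symmProd ω s ≤ symmProd ω t * C :=
  calc symmProd ω s = symmProd ω (t + -(t - s)) := by rw [neg_sub, add_sub_cancel]
    _ ≤ symmProd ω t * symmProd ω (-(t - s)) := symmProd_add_le hnonneg hsub _ _
    _ ≤ symmProd ω t * C := by
      rw [symmProd_neg]
      exact mul_le_mul_of_nonneg_left (hC _ hts)
        (mul_nonneg (hnonneg _) (hnonneg _))

lemma exists_pos_bound_symmProd [TopologicalSpace G] [ContinuousNeg G] {K : Set G}
    (hK : IsCompact K) (hne : K.Nonempty) (hcont : Continuous ω) (hpos : ∀ t, 0 < ω t) :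
    ∃ C > 0, ∀ r ∈ K, symmProd ω r ≤ C := by
  obtain ⟨c, -, hc⟩ := hK.exists_isMaxOn hne
    (hcont.mul (hcont.comp continuous_neg)).continuousOn
  exact ⟨symmProd ω c, mul_pos (hpos _) (hpos _), fun r hr => hc hr⟩

end SymmProd

lemma sub_floor_div_mul_mem_Ico {t t₀ : ℝ} (ht : 0 ≤ t) (ht₀ : 0 < t₀) :
    t - ⌊t / t₀⌋₊ * t₀ ∈ Ico 0 t₀ := by
  constructor
  · rw [sub_nonneg, ← le_div_iff₀ ht₀]
    exact Nat.floor_le (div_nonneg ht ht₀.le)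
  · rw [sub_lt_iff_lt_add', ← add_one_mul, ← div_lt_iff₀ ht₀]
    exact Nat.lt_floor_add_one _

/-- If ω is a weight on (ℝ,+) with liminf_{t→∞} ω(t)ω(−t)/t = 0,
then for every t₀ > 0, liminf_{n→∞} ω(n t₀)ω(−n t₀)/n = 0. -/
theorem stmt0 (ω : ℝ → ℝ) (hcont : Continuous ω) (hpos : ∀ t, 0 < ω t)
    (hsub : ∀ s t, ω (s + t) ≤ ω s * ω t)
    (h : ∀ ε > (0:ℝ), ∀ M > (0:ℝ), ∃ t > M, ω t * ω (-t) / t < ε) :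
    ∀ t₀ > (0:ℝ), ∀ ε > (0:ℝ), ∀ M : ℕ, ∃ n : ℕ, n > M ∧
      ω (n * t₀) * ω (-(n * t₀)) / n < ε := by
  intro t₀ ht₀ ε hε M
  obtain ⟨C, hC, hCbound⟩ := exists_pos_bound_symmProd (isCompact_Icc (a := 0) (b := t₀))
    (nonempty_Icc.2 ht₀.le) hcont hpos
  obtain ⟨t, ht, hsmall⟩ := h (ε / (2 * C * t₀)) (by positivity) ((M + 1) * t₀) (by positivity)
  have htpos : 0 < t := lt_of_le_of_lt (by positivity) ht
  set n := ⌊t / t₀⌋₊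
  obtain ⟨hnt, htn⟩ := sub_floor_div_mul_mem_Ico htpos.le ht₀
  have hMn : M < n := by exact_mod_cast (show (M : ℝ) < n by nlinarith)
  have hn : (1 : ℝ) ≤ n := by exact_mod_cast Nat.one_le_of_lt hMn
  have ht_lt : t < 2 * n * t₀ := by nlinarith
  refine ⟨n, hMn, ?_⟩
  rw [div_lt_iff₀ htpos] at hsmall
  rw [div_lt_iff₀ (by linarith)]
  calc symmProd ω (n * t₀) ≤ symmProd ω t * C :=
        symmProd_le_mul_of_sub_mem (fun t => (hpos t).le) hsub hCbound ⟨hnt, htn.le⟩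
    _ < ε / (2 * C * t₀) * t * C := mul_lt_mul_of_pos_right hsmall hC
    _ = ε * t / (2 * t₀) := by field_simp
    _ < ε * n := by rw [div_lt_iff₀ (by positivity)]; nlinarith
end

section
/- Let ω : ℝ → ℝ be a weight on (ℝ, +). The following are equivalent: (1) liminf_{t→∞} ω(t)ω(−t)/|t| = 0; (2) for every t ∈ ℝ, liminf_{n→∞} ω(nt)ω(−nt)/n = 0; (3) liminf_{n→∞} ω(n)ω(−n)/n = 0; (4) there exists t₀ ≠ 0 with liminf_{n→∞} ω(n t₀)ω(−n t₀)/n = 0. -/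
/-!
Put `f x = ω x * ω (-x)`: it is positive, continuous, even and submultiplicative, and every
condition says that `f` grows sublinearly along some sequence tending to infinity. Passing from a
real `s` to the multiple `⌊s / a⌋₊ * a` of a step `a > 0` changes `f` by at most the factor
`max_{[-a, 0]} f`, so small values of `f s / s` along the reals produce small values along every
arithmetic progression; the converse is immediate.
-/

open Filter Set

lemma mul_comp_neg_add_le {ω : ℝ → ℝ} (hω : ∀ t, 0 ≤ ω t)
    (hsub : ∀ s t, ω (s + t) ≤ ω s * ω t) (x y : ℝ) :
    ω (x + y) * ω (-(x + y)) ≤ ω x * ω (-x) * (ω y * ω (-y)) :=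
  calc ω (x + y) * ω (-(x + y)) = ω (x + y) * ω (-x + -y) := by rw [neg_add]
    _ ≤ ω x * ω y * (ω (-x) * ω (-y)) :=
      mul_le_mul (hsub x y) (hsub _ _) (hω _) (mul_nonneg (hω x) (hω y))
    _ = ω x * ω (-x) * (ω y * ω (-y)) := by ring

lemma forall_pos_exists_div_abs_lt_iff {g : ℝ → ℝ} {ε : ℝ} :
    (∀ M > 0, ∃ t > M, g t / |t| < ε) ↔ ∃ᶠ t in atTop, g t / t < ε := by
  rw [frequently_atTop']
  constructor
  · intro h M
    obtain ⟨t, ht, hg⟩ := h (max M 1) (by positivity)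
    have ht_pos : 0 < t := by linarith [le_max_right M 1]
    exact ⟨t, (le_max_left M 1).trans_lt ht, by rwa [abs_of_pos ht_pos] at hg⟩
  · intro h M hM
    obtain ⟨t, ht, hg⟩ := h M
    exact ⟨t, ht, by rwa [abs_of_pos (hM.trans ht)]⟩

lemma exists_div_floor_mul_le {f : ℝ → ℝ} (hf_cont : Continuous f) (hf_pos : ∀ x, 0 < f x)
    (hf_sub : ∀ x y, f (x + y) ≤ f x * f y) {a : ℝ} (ha : 0 < a) :
    ∃ C > 0, ∀ s ≥ 2 * a, f (⌊s / a⌋₊ * a) / ⌊s / a⌋₊ ≤ C * (f s / s) := by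
  obtain ⟨u, -, hu⟩ := isCompact_Icc.exists_isMaxOn (nonempty_Icc.2 (neg_nonpos.2 ha.le))
    hf_cont.continuousOn
  refine ⟨2 * a * f u, mul_pos (by positivity) (hf_pos u), fun s hs => ?_⟩
  have hs_pos : 0 < s := by linarith
  set n := ⌊s / a⌋₊
  have hn_le : n * a ≤ s := (le_div_iff₀ ha).1 (Nat.floor_le (by positivity))
  have hn_gt : s < (n + 1) * a := (div_lt_iff₀ ha).1 (Nat.lt_floor_add_one _)
  have hs_le : s / (2 * a) ≤ n := by rw [div_le_iff₀ (by positivity)]; linarith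
  have hfn : f (n * a) ≤ f s * f u :=
    calc f (n * a) = f (s + (n * a - s)) := by ring_nf
      _ ≤ f s * f (n * a - s) := hf_sub _ _
      _ ≤ f s * f u := mul_le_mul_of_nonneg_left (hu ⟨by linarith, by linarith⟩) (hf_pos s).le
  calc f (n * a) / n ≤ f s * f u / n := by gcongr
    _ ≤ f s * f u / (s / (2 * a)) := by gcongr; exact (mul_pos (hf_pos s) (hf_pos u)).le
    _ = 2 * a * f u * (f s / s) := by field_simp

lemma frequently_div_nat_lt {f : ℝ → ℝ} (hf_cont : Continuous f) (hf_pos : ∀ x, 0 < f x)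
    (hf_sub : ∀ x y, f (x + y) ≤ f x * f y) {a : ℝ} (ha : 0 < a)
    (h : ∀ ε > 0, ∃ᶠ s in atTop, f s / s < ε) {ε : ℝ} (hε : 0 < ε) :
    ∃ᶠ n : ℕ in atTop, f (n * a) / n < ε := by
  obtain ⟨C, hC, hle⟩ := exists_div_floor_mul_le hf_cont hf_pos hf_sub ha
  have hfloor : Tendsto (fun s => ⌊s / a⌋₊) atTop atTop :=
    tendsto_nat_floor_atTop.comp (tendsto_id.atTop_div_const ha)
  refine hfloor.frequently_map _ ?_ ((h (ε / C) (by positivity)).and_eventually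
    (eventually_ge_atTop (2 * a)))
  rintro s ⟨hs, hs_ge⟩
  calc _ ≤ C * (f s / s) := hle s hs_ge
    _ < ε := by rwa [lt_div_iff₀' hC] at hs

lemma frequently_div_lt_of_frequently_div_nat_lt {f : ℝ → ℝ} {a : ℝ} (ha : 0 < a)
    (h : ∀ ε > 0, ∃ᶠ n : ℕ in atTop, f (n * a) / n < ε) {ε : ℝ} (hε : 0 < ε) :
    ∃ᶠ s in atTop, f s / s < ε :=
  (tendsto_natCast_atTop_atTop.atTop_mul_const ha).frequently_map _
    (fun n hn => by rwa [← div_div, div_lt_iff₀ ha]) (h (ε * a) (by positivity))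

/-- equivalence of the four liminf conditions for a weight on (ℝ,+). -/
theorem stmt2 (ω : ℝ → ℝ) (hcont : Continuous ω) (hpos : ∀ t, 0 < ω t)
    (hsub : ∀ s t, ω (s + t) ≤ ω s * ω t) :
    List.TFAE
      [ (∀ ε > (0:ℝ), ∀ M > (0:ℝ), ∃ t > M, ω t * ω (-t) / |t| < ε),
        (∀ t : ℝ, ∀ ε > (0:ℝ), ∀ M : ℕ, ∃ n : ℕ, n > M ∧
          ω (n * t) * ω (-(n * t)) / n < ε),
        (∀ ε > (0:ℝ), ∀ M : ℕ, ∃ n : ℕ, n > M ∧ ω n * ω (-(n:ℝ)) / n < ε),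
        (∃ t₀ : ℝ, t₀ ≠ 0 ∧ ∀ ε > (0:ℝ), ∀ M : ℕ, ∃ n : ℕ, n > M ∧
          ω (n * t₀) * ω (-(n * t₀)) / n < ε) ] := by
  let f : ℝ → ℝ := fun x => ω x * ω (-x)
  have hf_pos (x : ℝ) : 0 < f x := mul_pos (hpos x) (hpos (-x))
  have hf_sub : ∀ x y, f (x + y) ≤ f x * f y := mul_comp_neg_add_le (fun t => (hpos t).le) hsub
  have hf_cont : Continuous f := hcont.mul (hcont.comp continuous_neg)
  have hf_abs (n : ℕ) (t : ℝ) : f (n * |t|) = f (n * t) := by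
    rcases abs_choice t with h | h <;> simp only [f, h, mul_neg, neg_neg, mul_comm]
  simp only [forall_pos_exists_div_abs_lt_iff, ← frequently_atTop']
  tfae_have 1 → 2 := by
    intro h1 t ε hε
    rcases eq_or_ne t 0 with rfl | ht
    · simpa [f] using ((tendsto_const_div_atTop_nhds_zero_nat (f 0)).eventually
        (gt_mem_nhds hε)).frequently
    · simpa only [hf_abs] using frequently_div_nat_lt hf_cont hf_pos hf_sub (abs_pos.2 ht) h1 hε
  tfae_have 2 → 3 := fun h2 => by simpa only [mul_one] using h2 1
  tfae_have 3 → 4 := fun h3 => ⟨1, one_ne_zero, by simpa only [mul_one] using h3⟩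
  tfae_have 4 → 1 := by
    rintro ⟨t₀, ht₀, h4⟩ ε hε
    exact frequently_div_lt_of_frequently_div_nat_lt (f := f) (abs_pos.2 ht₀)
      (by simpa only [hf_abs] using h4) hε
  tfae_finish
end

section
/- Let ω be a weight on a locally compact group G and define ω̂(t) = limsup_{s→∞} ω(ts)/ω(s) := inf over compact K ⊆ G of sup_{s ∈ G \ K} ω(ts)/ω(s). If G is not compact, then ω̂ is submultiplicative: ω̂(t₁t₂) ≤ ω̂(t₁)ω̂(t₂) for all t₁, t₂ ∈ G. -/
open scoped ENNReal
open Filter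

/-!
Write `r t s = ω (t s) / ω s`, so that `ω̂ t = limsup_{s → ∞} r t s` along the cocompact filter.
The cocycle identity `r (t₁ t₂) s = r t₁ (t₂ s) * r t₂ s` and the invariance of the cocompact
filter under the homeomorphism `s ↦ t₂ s` reduce the claim to `limsup (u * v) ≤ limsup u * limsup v`,
which holds in `ℝ≥0∞` once both limsups are finite; and they are, since `r t s ≤ ω t`.
-/

theorem iInf_isCompact_iSup_notMem_eq_limsup_cocompact {X α : Type*} [TopologicalSpace X]
    [CompleteLattice α] (f : X → α) :
    ⨅ (K : Set X) (_ : IsCompact K), ⨆ (x : X) (_ : x ∉ K), f x = limsup f (cocompact X) :=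
  hasBasis_cocompact.limsup_eq_iInf_iSup.symm

theorem limsup_cocompact_comp_homeomorph {X Y α : Type*} [TopologicalSpace X]
    [TopologicalSpace Y] [CompleteLattice α] (e : X ≃ₜ Y) (f : Y → α) :
    limsup (f ∘ e) (cocompact X) = limsup f (cocompact Y) := by
  rw [limsup_comp, e.map_cocompact]

section Submultiplicative

variable {G : Type*} [Group G] {ω : G → ℝ}

theorem div_le_of_submultiplicative (hpos : ∀ t, 0 < ω t)
    (hsub : ∀ s t, ω (s * t) ≤ ω s * ω t) (t s : G) : ω (t * s) / ω s ≤ ω t :=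
  div_le_of_le_mul₀ (hpos s).le (hpos t).le (hsub t s)

theorem ofReal_div_mul_cocycle (hpos : ∀ t, 0 < ω t) (t₁ t₂ s : G) :
    ENNReal.ofReal (ω (t₁ * t₂ * s) / ω s) =
      ENNReal.ofReal (ω (t₁ * (t₂ * s)) / ω (t₂ * s)) * ENNReal.ofReal (ω (t₂ * s) / ω s) := by
  rw [← ENNReal.ofReal_mul (div_nonneg (hpos _).le (hpos _).le), div_mul_div_cancel₀ (hpos _).ne',
    mul_assoc]

theorem limsup_ofReal_div_ne_top [TopologicalSpace G] (hpos : ∀ t, 0 < ω t)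
    (hsub : ∀ s t, ω (s * t) ≤ ω s * ω t) (t : G) :
    limsup (fun s => ENNReal.ofReal (ω (t * s) / ω s)) (cocompact G) ≠ ∞ :=
  ne_top_of_le_ne_top ENNReal.ofReal_ne_top <| (limsup_le_iSup).trans <|
    iSup_le fun s => ENNReal.ofReal_le_ofReal (div_le_of_submultiplicative hpos hsub t s)

end Submultiplicative

theorem stmt9_general {G : Type*} [Group G] [TopologicalSpace G] [IsTopologicalGroup G]
    (ω : G → ℝ) (hpos : ∀ t, 0 < ω t)
    (hsub : ∀ s t, ω (s * t) ≤ ω s * ω t) (t₁ t₂ : G) :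
    (⨅ (K : Set G) (_ : IsCompact K), ⨆ (s : G) (_ : s ∉ K),
        ENNReal.ofReal (ω (t₁ * t₂ * s) / ω s)) ≤
    (⨅ (K : Set G) (_ : IsCompact K), ⨆ (s : G) (_ : s ∉ K),
        ENNReal.ofReal (ω (t₁ * s) / ω s)) *
    (⨅ (K : Set G) (_ : IsCompact K), ⨆ (s : G) (_ : s ∉ K),
        ENNReal.ofReal (ω (t₂ * s) / ω s)) := by
  simp only [iInf_isCompact_iSup_notMem_eq_limsup_cocompact]
  set r : G → G → ℝ≥0∞ := fun t s => ENNReal.ofReal (ω (t * s) / ω s)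
  have hfin : ∀ t, limsup (r t) (cocompact G) ≠ ∞ := limsup_ofReal_div_ne_top hpos hsub
  calc limsup (fun s => ENNReal.ofReal (ω (t₁ * t₂ * s) / ω s)) (cocompact G)
      = limsup (r t₁ ∘ Homeomorph.mulLeft t₂ * r t₂) (cocompact G) := by
        congr 1
        funext s
        exact ofReal_div_mul_cocycle hpos t₁ t₂ s
    _ ≤ limsup (r t₁ ∘ Homeomorph.mulLeft t₂) (cocompact G) * limsup (r t₂) (cocompact G) :=
        ENNReal.limsup_mul_le' (.inr (hfin t₂))
          (.inl (by rw [limsup_cocompact_comp_homeomorph]; exact hfin t₁))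
    _ = limsup (r t₁) (cocompact G) * limsup (r t₂) (cocompact G) := by
        rw [limsup_cocompact_comp_homeomorph]

/-- submultiplicativity of ω̂(t) = limsup_{s→∞} ω(ts)/ω(s) on a locally
compact noncompact group (values taken in ℝ≥0∞). -/
theorem stmt9 {G : Type*} [Group G] [TopologicalSpace G] [IsTopologicalGroup G]
    [LocallyCompactSpace G] (hnc : ¬ CompactSpace G)
    (ω : G → ℝ) (hcont : Continuous ω) (hpos : ∀ t, 0 < ω t)
    (hsub : ∀ s t, ω (s * t) ≤ ω s * ω t) (t₁ t₂ : G) :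
    (⨅ (K : Set G) (_ : IsCompact K), ⨆ (s : G) (_ : s ∉ K),
        ENNReal.ofReal (ω (t₁ * t₂ * s) / ω s)) ≤
    (⨅ (K : Set G) (_ : IsCompact K), ⨆ (s : G) (_ : s ∉ K),
        ENNReal.ofReal (ω (t₁ * s) / ω s)) *
    (⨅ (K : Set G) (_ : IsCompact K), ⨆ (s : G) (_ : s ∉ K),
        ENNReal.ofReal (ω (t₂ * s) / ω s)) :=
  stmt9_general ω hpos hsub t₁ t₂
end

section
/- Consider the weight ω on ℤ² defined by ω(s,t) = (1+|s|+|t|)^α (1+|s+t|)^β with α, β ≥ 0. If α + 2β < 1, then for every (s,t) ∈ ℤ², lim_{n→∞} ω(ns,nt)·(1+n|s+t|)^β / n = 0. -/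
/-! Each factor (1 + n·a) is O(n), so the numerator is O(n^(α + 2β)), and dividing by n leaves
O(n^(α + 2β - 1)), which tends to 0 because α + 2β < 1. -/

open Filter Asymptotics Real Topology

lemma isBigO_one_add_mul_rpow (a : ℝ) {γ : ℝ} (hγ : 0 ≤ γ) :
    (fun x : ℝ => (1 + x * a) ^ γ) =O[atTop] (· ^ γ) := by
  have hlin : (fun x : ℝ => 1 + x * a) =O[atTop] id :=
    (isLittleO_const_id_atTop (1 : ℝ)).isBigO.add
      ((isBigO_const_mul_self a id atTop).congr_left fun x => mul_comm a x)
  exact hlin.rpow hγ (eventually_ge_atTop 0)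

lemma tendsto_one_add_mul_rpow_mul_rpow_div_atTop (a b : ℝ) {α β : ℝ} (hα : 0 ≤ α)
    (hβ : 0 ≤ β) (h : α + 2 * β < 1) :
    Tendsto (fun x : ℝ => (1 + x * a) ^ α * (1 + x * b) ^ β * (1 + x * b) ^ β / x)
      atTop (𝓝 0) := by
  have hO : (fun x : ℝ => (1 + x * a) ^ α * (1 + x * b) ^ β * (1 + x * b) ^ β / x)
      =O[atTop] fun x => x ^ α * x ^ β * x ^ β / x :=
    (((isBigO_one_add_mul_rpow a hα).mul (isBigO_one_add_mul_rpow b hβ)).mul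
      (isBigO_one_add_mul_rpow b hβ)).mul (isBigO_refl (·⁻¹) atTop)
  refine hO.trans_tendsto
    ((tendsto_rpow_neg_atTop (y := 1 - (α + 2 * β)) (by linarith)).congr' ?_)
  filter_upwards [eventually_gt_atTop 0] with x hx
  rw [← rpow_add hx, ← rpow_add hx, ← rpow_sub_one hx.ne']
  ring_nf

/-- for ω(s,t)=(1+|s|+|t|)^α(1+|s+t|)^β on ℤ² with α+2β<1,
lim_{n→∞} ω(ns,nt)(1+n|s+t|)^β / n = 0. -/
theorem stmt11 (α β : ℝ) (hα : 0 ≤ α) (hβ : 0 ≤ β) (h : α + 2 * β < 1) (s t : ℤ) :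
    Filter.Tendsto (fun n : ℕ =>
      ((1 + |(n : ℤ) * s| + |(n : ℤ) * t| : ℤ) : ℝ) ^ α *
      ((1 + |(n : ℤ) * s + (n : ℤ) * t| : ℤ) : ℝ) ^ β *
      (1 + (n : ℝ) * |((s + t : ℤ) : ℝ)|) ^ β / (n : ℝ))
      Filter.atTop (nhds 0) := by
  refine ((tendsto_one_add_mul_rpow_mul_rpow_div_atTop (|(s : ℝ)| + |(t : ℝ)|)
    |((s + t : ℤ) : ℝ)| hα hβ h).comp tendsto_natCast_atTop_atTop).congr fun n => ?_
  simp only [Function.comp_apply, Int.cast_add, Int.cast_one, Int.cast_abs, Int.cast_mul,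
    Int.cast_natCast, abs_mul, Nat.abs_cast, ← mul_add]
  ring_nf
end

section
/- Let 𝒜 be a commutative Banach algebra containing a set E of mutually annihilating idempotents (e² = e for all e ∈ E, and e₁e₂ = 0 for distinct e₁, e₂ ∈ E) whose linear span is dense in 𝒜. Then every continuous derivation D : 𝒜 → 𝒜* (into the dual bimodule) is zero; i.e., 𝒜 is weakly amenable. -/
/-!
A derivation into the dual of a commutative algebra kills every idempotent: for `e² = e`
the derivation identity gives `D e x = 2 • D e (e x)` and `D e (e x) = 2 • D e (e x)`.
A continuous linear map vanishing on a set with dense span vanishes everywhere.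
-/

theorem apply_eq_zero_of_isIdempotentElem {A M : Type*} [CommSemigroup A]
    [AddLeftCancelMonoid M] (D : A → A → M)
    (hD : ∀ a b x : A, D (a * b) x = D b (x * a) + D a (b * x))
    {e : A} (he : IsIdempotentElem e) (x : A) : D e x = 0 := by
  have hex : D e (e * x) = D e (e * x) + D e (e * x) := by
    have h := hD e e (e * x)
    rwa [he.eq, mul_right_comm, he.eq, ← mul_assoc, he.eq] at h
  have hex_zero : D e (e * x) = 0 := add_eq_left.mp hex.symm
  have h := hD e e x
  rwa [he.eq, mul_comm x e, hex_zero, add_zero] at h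

theorem stmt16_general {A : Type*} [NormedCommRing A] [NormedAlgebra ℂ A]
    (E : Set A) (hidem : ∀ e ∈ E, e * e = e)
    (hdense : Dense (Submodule.span ℂ E : Set A))
    (D : A →L[ℂ] (A →L[ℂ] ℂ))
    (hD : ∀ a b x : A, D (a * b) x = D b (x * a) + D a (b * x)) :
    D = 0 :=
  ContinuousLinearMap.ext_on hdense fun e he => ContinuousLinearMap.ext fun x =>
    apply_eq_zero_of_isIdempotentElem (fun a x => D a x) hD (hidem e he) x

/-- a commutative Banach algebra with a dense span of mutually
annihilating idempotents is weakly amenable: every continuous derivation into the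
dual module vanishes. -/
theorem stmt16 {A : Type*} [NormedCommRing A] [NormedAlgebra ℂ A] [CompleteSpace A]
    (E : Set A) (hidem : ∀ e ∈ E, e * e = e)
    (hann : ∀ e₁ ∈ E, ∀ e₂ ∈ E, e₁ ≠ e₂ → e₁ * e₂ = 0)
    (hdense : Dense (Submodule.span ℂ E : Set A))
    (D : A →L[ℂ] (A →L[ℂ] ℂ))
    (hD : ∀ a b x : A, D (a * b) x = D b (x * a) + D a (b * x)) :
    D = 0 :=
  stmt16_general E hidem hdense D hD
end

section
/- Let G₁,…,G_k be abelian groups and ω a strictly positive submultiplicative function on G = G₁ × ⋯ × G_k. Suppose there is r > 0 such that ω(T_i) ≤ r·ω(t₁,…,t_k) for all i and all (t₁,…,t_k) ∈ G, where T_i has t_i in the i-th coordinate and identities elsewhere. If for each i there is no nontrivial homomorphism φ : G_i → ℂ with sup_{t∈G_i} |φ(t)|/(ω_i(t)ω_i(t⁻¹)) < ∞ (where ω_i(t) = ω of the element with t in coordinate i and identities elsewhere), then there is no nontrivial homomorphism Φ : G → ℂ with sup_{g∈G} |Φ(g)|/(ω(g)ω(g⁻¹)) < ∞. -/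
/-!
An additive map Φ on a finite product is determined by its restrictions `Φ ∘ Pi.mulSingle i`,
and each restriction inherits the bound on Φ with the weight `ω_i`, i.e. ω restricted to the
`i`-th factor. So every restriction is trivial by hypothesis, hence so is Φ.
-/

theorem eq_zero_of_map_mulSingle_eq_zero {ι : Type*} [Finite ι] [DecidableEq ι]
    {G : ι → Type*} [∀ i, CommMonoid (G i)] {A : Type*} [AddCommGroup A]
    (Φ : (∀ i, G i) → A) (hadd : ∀ g h, Φ (g * h) = Φ g + Φ h)
    (hsingle : ∀ i t, Φ (Pi.mulSingle i t) = 0) (g : ∀ i, G i) : Φ g = 0 := by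
  let f : (∀ i, G i) →* Multiplicative A :=
    MonoidHom.mk' (fun g => Multiplicative.ofAdd (Φ g)) hadd
  have hf : f = 1 := MonoidHom.functions_ext _ f 1 hsingle
  exact congrArg Multiplicative.toAdd (DFunLike.congr_fun hf g)

theorem stmt18_general {k : ℕ} (G : Fin k → Type*) [∀ i, CommGroup (G i)]
    (ω : (∀ i, G i) → ℝ)
    (hfac : ∀ i : Fin k, ¬ ∃ φ : G i → ℂ,
      (∀ s t, φ (s * t) = φ s + φ t) ∧ (∃ t, φ t ≠ 0) ∧
      ∃ C : ℝ, ∀ t, ‖φ t‖ /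
        (ω (Pi.mulSingle i t) * ω (Pi.mulSingle i t⁻¹)) ≤ C) :
    ¬ ∃ Φ : (∀ i, G i) → ℂ,
      (∀ g h, Φ (g * h) = Φ g + Φ h) ∧ (∃ g, Φ g ≠ 0) ∧
      ∃ C : ℝ, ∀ g, ‖Φ g‖ / (ω g * ω g⁻¹) ≤ C := by
  rintro ⟨Φ, hadd, ⟨g₀, hg₀⟩, C, hC⟩
  refine hg₀ (eq_zero_of_map_mulSingle_eq_zero Φ hadd (fun i t => ?_) g₀)
  by_contra ht
  refine hfac i ⟨fun t => Φ (Pi.mulSingle i t), fun s t => ?_, ⟨t, ht⟩, C, fun t => ?_⟩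
  · simp only [← hadd, Pi.mulSingle_mul]
  · simpa only [Pi.mulSingle_inv] using hC (Pi.mulSingle i t)

/-- under the domination condition ω(T_i) ≤ r ω(t₁,…,t_k), if no factor
admits a nontrivial bounded homomorphism into ℂ, then neither does the product. -/
theorem stmt18 {k : ℕ} (G : Fin k → Type*) [∀ i, CommGroup (G i)]
    (ω : (∀ i, G i) → ℝ) (hpos : ∀ g, 0 < ω g)
    (hsub : ∀ g h, ω (g * h) ≤ ω g * ω h)
    (r : ℝ) (hr : 0 < r)
    (hdom : ∀ (i : Fin k) (g : ∀ i, G i), ω (Pi.mulSingle i (g i)) ≤ r * ω g)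
    (hfac : ∀ i : Fin k, ¬ ∃ φ : G i → ℂ,
      (∀ s t, φ (s * t) = φ s + φ t) ∧ (∃ t, φ t ≠ 0) ∧
      ∃ C : ℝ, ∀ t, ‖φ t‖ /
        (ω (Pi.mulSingle i t) * ω (Pi.mulSingle i t⁻¹)) ≤ C) :
    ¬ ∃ Φ : (∀ i, G i) → ℂ,
      (∀ g h, Φ (g * h) = Φ g + Φ h) ∧ (∃ g, Φ g ≠ 0) ∧
      ∃ C : ℝ, ∀ g, ‖Φ g‖ / (ω g * ω g⁻¹) ≤ C :=
  stmt18_general G ω hfac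
end
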